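/- Let I ⊆ ℝ be an open interval, f : I → ℝ positive and differentiable, and a > 0, c₂ ≠ 0, H₀ real constants with 4H₀² + a²c₂² = a². Define φ : I × ℝ → ℝ⁴ by φ(u,v) = (u, sin(a v)/(a f(u)), cos(a v)/(a f(u)), 2H₀/(a² c₂ f(u))) and e₄ : I × ℝ → ℝ⁴ by e₄(u,v) = (1/f(u))·(0, −(2H₀/a) sin(a v), −(2H₀/a) cos(a v), c₂). Then, with respect to the Robertson–Walker metric ⟨X,Y⟩ = −X₁Y₁ + f(t)²(X₂Y₂+X₃Y₃+X₄Y₄) at points with first coordinate t = u, one has at every (u,v): ⟨e₄, e₄⟩ = 1, ⟨e₄, ∂φ/∂u⟩ = 0, ⟨e₄, ∂φ/∂v⟩ = 0, and the first component of e₄ is zero (so ⟨e₄, ∂/∂t⟩ = 0 for ∂/∂t = (1,0,0,0)). -/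

import Mathlib

open Real

/-- The Robertson–Walker metric of `L⁴₁(f,0)` at a point with first coordinate `t`:
`⟨X,Y⟩ = -X₁Y₁ + f(t)²(X₂Y₂ + X₃Y₃ + X₄Y₄)`. -/
noncomputable def rwMetric4 (f : ℝ → ℝ) (t : ℝ) (X Y : Fin 4 → ℝ) : ℝ :=
  -(X 0 * Y 0) + f t ^ 2 * (X 1 * Y 1 + X 2 * Y 2 + X 3 * Y 3)

/-- The rotational surface of Theorem 4.1 in `L⁴₁(f,0)`. -/
noncomputable def phiRW4 (f : ℝ → ℝ) (a c₂ H₀ : ℝ) (u v : ℝ) : Fin 4 → ℝ :=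
  ![u,
    Real.sin (a * v) / (a * f u),
    Real.cos (a * v) / (a * f u),
    2 * H₀ / (a ^ 2 * c₂ * f u)]

/-- The unit normal direction `e₄` of the parallel mean curvature vector `H = H₀e₄`. -/
noncomputable def eFour (f : ℝ → ℝ) (a c₂ H₀ : ℝ) (u v : ℝ) : Fin 4 → ℝ :=
  (f u)⁻¹ • ![0, -(2 * H₀ / a) * Real.sin (a * v), -(2 * H₀ / a) * Real.cos (a * v), c₂]

/-! Write `e₄ = f(u)⁻¹ N(v)` with `N = (0, -(2H₀/a) sin av, -(2H₀/a) cos av, c₂)`. Then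
`⟨e₄,e₄⟩ = 4H₀²/a² + c₂² = 1` by (4.6). The `v`-derivative of `φ` points along
`(0, cos av, -sin av, 0)`, orthogonal to `N`. The `u`-derivative is `∂/∂t` plus a multiple of
`(0, sin av / a, cos av / a, 2H₀/(a²c₂))`, whose spatial product with `N` is
`-2H₀/a² + 2H₀/a² = 0`. -/

section

variable (f : ℝ → ℝ) (a c₂ H₀ : ℝ)

theorem rwMetric4_smul_left (t c : ℝ) (X Y : Fin 4 → ℝ) :
    rwMetric4 f t (c • X) Y = c * rwMetric4 f t X Y := by
  simp only [rwMetric4, Pi.smul_apply, smul_eq_mul]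
  ring

/-- No differentiability of `f` is needed: when `(f ·)⁻¹` is not differentiable at `u`,
both sides are junk zeros together. -/
theorem deriv_phiRW4_fst (u v : ℝ) :
    (fun i => deriv (fun u' => phiRW4 f a c₂ H₀ u' v i) u) =
      ![1, sin (a * v) / a * deriv (fun u' => (f u')⁻¹) u,
        cos (a * v) / a * deriv (fun u' => (f u')⁻¹) u,
        2 * H₀ / (a ^ 2 * c₂) * deriv (fun u' => (f u')⁻¹) u] := by
  funext i
  fin_cases i <;> simp [phiRW4, div_mul_eq_div_div _ _ (f _), div_eq_mul_inv _ (f _)]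

theorem deriv_phiRW4_snd (u v : ℝ) :
    (fun i => deriv (fun v' => phiRW4 f a c₂ H₀ u v' i) v) =
      ![0, a * cos (a * v) / (a * f u), -(a * sin (a * v)) / (a * f u), 0] := by
  funext i
  have hsin : deriv (fun v' => sin (a * v')) v = a * cos (a * v) := by
    simpa [mul_comm] using ((hasDerivAt_id v).const_mul a).sin.deriv
  have hcos : deriv (fun v' => cos (a * v')) v = -(a * sin (a * v)) := by
    simpa [mul_comm] using ((hasDerivAt_id v).const_mul a).cos.deriv
  fin_cases i <;> simp [phiRW4, hsin, hcos]

theorem rwMetric4_eFour_self {u : ℝ} (v : ℝ) (ha : a ≠ 0) (hf : f u ≠ 0)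
    (hrel : 4 * H₀ ^ 2 + a ^ 2 * c₂ ^ 2 = a ^ 2) :
    rwMetric4 f u (eFour f a c₂ H₀ u v) (eFour f a c₂ H₀ u v) = 1 := by
  simp only [rwMetric4, eFour, Pi.smul_apply, smul_eq_mul, Matrix.cons_val]
  field_simp
  linear_combination f u ^ 2 * (4 * H₀ ^ 2 * sin_sq_add_cos_sq (a * v) + hrel)

theorem rwMetric4_eFour_deriv_phiRW4_fst (u v : ℝ) (hc₂ : c₂ ≠ 0) :
    rwMetric4 f u (eFour f a c₂ H₀ u v)
      (fun i => deriv (fun u' => phiRW4 f a c₂ H₀ u' v i) u) = 0 := by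
  rw [deriv_phiRW4_fst, eFour, rwMetric4_smul_left]
  simp only [rwMetric4, Matrix.cons_val]
  have hcancel : c₂ * (2 * H₀ / (a ^ 2 * c₂)) = 2 * H₀ / a ^ 2 := by field_simp
  set k := (f u)⁻¹ * f u ^ 2 * deriv (fun u' => (f u')⁻¹) u
  linear_combination k * hcancel - k * (2 * H₀ / a ^ 2) * sin_sq_add_cos_sq (a * v)

theorem rwMetric4_eFour_deriv_phiRW4_snd (u v : ℝ) :
    rwMetric4 f u (eFour f a c₂ H₀ u v)
      (fun i => deriv (fun v' => phiRW4 f a c₂ H₀ u v' i) v) = 0 := by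
  rw [deriv_phiRW4_snd, eFour, rwMetric4_smul_left]
  simp only [rwMetric4, Matrix.cons_val]
  ring

theorem eFour_zero (u v : ℝ) : eFour f a c₂ H₀ u v 0 = 0 := by
  simp [eFour]

end

theorem eFour_unit_normal_general (A B : ℝ) (f : ℝ → ℝ) (a c₂ H₀ : ℝ)
    (ha : 0 < a) (hc₂ : c₂ ≠ 0)
    (hrel : 4 * H₀ ^ 2 + a ^ 2 * c₂ ^ 2 = a ^ 2)
    (hfpos : ∀ u ∈ Set.Ioo A B, 0 < f u) :
    ∀ u ∈ Set.Ioo A B, ∀ v : ℝ,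
      rwMetric4 f u (eFour f a c₂ H₀ u v) (eFour f a c₂ H₀ u v) = 1 ∧
      rwMetric4 f u (eFour f a c₂ H₀ u v)
        (fun i => deriv (fun u' => phiRW4 f a c₂ H₀ u' v i) u) = 0 ∧
      rwMetric4 f u (eFour f a c₂ H₀ u v)
        (fun i => deriv (fun v' => phiRW4 f a c₂ H₀ u v' i) v) = 0 ∧
      eFour f a c₂ H₀ u v 0 = 0 := fun u hu v =>
  ⟨rwMetric4_eFour_self f a c₂ H₀ v ha.ne' (hfpos u hu).ne' hrel,
    rwMetric4_eFour_deriv_phiRW4_fst f a c₂ H₀ u v hc₂,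
    rwMetric4_eFour_deriv_phiRW4_snd f a c₂ H₀ u v,
    eFour_zero f a c₂ H₀ u v⟩

/-- `e₄` is a unit normal vector field of the rotational surface `φ` in `L⁴₁(f,0)`
whose first component vanishes: `⟨e₄,e₄⟩ = 1`, `⟨e₄,φ_u⟩ = 0`, `⟨e₄,φ_v⟩ = 0`
and `⟨e₄, ∂/∂t⟩ = 0` (the biconservativity condition). -/
theorem eFour_unit_normal (A B : ℝ) (f : ℝ → ℝ) (a c₂ H₀ : ℝ)
    (ha : 0 < a) (hc₂ : c₂ ≠ 0)
    (hrel : 4 * H₀ ^ 2 + a ^ 2 * c₂ ^ 2 = a ^ 2)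
    (hfpos : ∀ u ∈ Set.Ioo A B, 0 < f u)
    (hfdiff : ∀ u ∈ Set.Ioo A B, DifferentiableAt ℝ f u) :
    ∀ u ∈ Set.Ioo A B, ∀ v : ℝ,
      rwMetric4 f u (eFour f a c₂ H₀ u v) (eFour f a c₂ H₀ u v) = 1 ∧
      rwMetric4 f u (eFour f a c₂ H₀ u v)
        (fun i => deriv (fun u' => phiRW4 f a c₂ H₀ u' v i) u) = 0 ∧
      rwMetric4 f u (eFour f a c₂ H₀ u v)
        (fun i => deriv (fun v' => phiRW4 f a c₂ H₀ u v' i) v) = 0 ∧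
      eFour f a c₂ H₀ u v 0 = 0 :=
  eFour_unit_normal_general A B f a c₂ H₀ ha hc₂ hrel hfpos
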